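/- arXiv:0901.4456 — 4 statements merged into one kernel-verified Lean document; each statement's English description precedes it below -/
import Mathlib

section
/- Fix H ∈ (0,1) and an integer r ≥ 3. Then ρ_H(r) = r^{2H} · Σ_{l=1}^{∞} [2H(2H−1)(2H−2)⋯(2H−2l+1)/(2l)!] · (4 − 4^l) · r^{−2l}, where the series converges absolutely. -/
open Real

/-- `ρ_H(r)` from the paper. Here `x ^ y` with real exponent denotes `Real.rpow`. -/
noncomputable def rhoH (H : ℝ) (r : ℤ) : ℝ :=
  (-(|(r : ℝ) - 2| ^ (2 * H)) + 4 * |(r : ℝ) - 1| ^ (2 * H) - 6 * |(r : ℝ)| ^ (2 * H)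
      + 4 * |(r : ℝ) + 1| ^ (2 * H) - |(r : ℝ) + 2| ^ (2 * H)) / 2

/-- The general term of the series: for `l ≥ 1`,
`(2H(2H−1)⋯(2H−2l+1)/(2l)!) · (4 − 4^l) · r^{−2l}`. -/
noncomputable def seriesTerm (H : ℝ) (r : ℕ) (l : ℕ) : ℝ :=
  (∏ j ∈ Finset.range (2 * l), (2 * H - (j : ℝ))) / (2 * l).factorial
    * (4 - (4 : ℝ) ^ l) / (r : ℝ) ^ (2 * l)

/-!
For `r ≥ 3` each base `r + k`, `k ∈ {±1, ±2}`, factors as `r * (1 + k / r)` with `|k / r| < 1`,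
so `ρ_H(r) / r ^ (2H)` is a combination of binomial series
`(1 + y) ^ (2H) = ∑ choose(2H, n) y ^ n`. Pairing `k` with `-k` cancels the odd powers, the
constant terms add up to `6` and cancel the middle term, and the coefficient of `r ^ (-2l)` is
`choose(2H, 2l) (4 - 4 ^ l)`. Since `|4 - 4 ^ l| ≤ 2 ^ (2l)`, absolute convergence follows from
that of the binomial series at `2 / r`.
-/

open Finset

namespace Real

theorem choose_eq_prod_div_factorial (a : ℝ) (n : ℕ) :
    Ring.choose a n = (∏ j ∈ range n, (a - j)) / n.factorial := by
  rw [Ring.choose_eq_smul, ← Polynomial.aeval_eq_smeval, Polynomial.aeval_def,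
    Polynomial.eval₂_eq_eval_map, descPochhammer_map, descPochhammer_eval_eq_prod_range,
    smul_eq_mul, inv_mul_eq_div]

theorem hasSum_choose_mul_pow (a : ℝ) {x : ℝ} (hx : |x| < 1) :
    HasSum (fun n ↦ Ring.choose a n * x ^ n) ((1 + x) ^ a) := by
  have hx' : ‖x‖ₑ < 1 := by simpa [enorm_eq_nnnorm, ← NNReal.coe_lt_one] using hx
  simpa [binomialSeries, FormalMultilinearSeries.ofScalars_apply_eq, mul_comm] using
    one_add_rpow_hasFPowerSeriesOnBall_zero.hasSum (y := x) (by simpa using hx')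

theorem summable_abs_choose_mul_pow (a : ℝ) {x : ℝ} (hx : |x| < 1) :
    Summable fun n ↦ |Ring.choose a n| * |x| ^ n := by
  have hx' : x ∈ Metric.eball 0 (binomialSeries ℝ a).radius :=
    Metric.mem_eball.2 <| lt_of_lt_of_le (by simpa [edist_dist] using hx)
      binomialSeries_radius_ge_one
  simpa [binomialSeries, FormalMultilinearSeries.ofScalars_apply_eq, abs_mul, mul_comm] using
    (binomialSeries ℝ a).summable_norm_apply hx'

theorem hasSum_two_mul_choose_even_mul_pow (a : ℝ) {x : ℝ} (hx : |x| < 1) :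
    HasSum (fun l ↦ 2 * Ring.choose a (2 * l) * x ^ (2 * l)) ((1 + x) ^ a + (1 - x) ^ a) := by
  have hsum := (hasSum_choose_mul_pow a hx).add (hasSum_choose_mul_pow a (x := -x) (by simpa))
  rw [← sub_eq_add_neg] at hsum
  have hinj : Function.Injective (fun l : ℕ ↦ 2 * l) := fun _ _ h ↦ by simpa using h
  have hodd : ∀ n ∉ Set.range (fun l : ℕ ↦ 2 * l),
      Ring.choose a n * x ^ n + Ring.choose a n * (-x) ^ n = 0 := by
    intro n hn
    have : Odd n := Nat.not_even_iff_odd.1 fun ⟨l, hl⟩ ↦ hn ⟨l, by simp [hl, two_mul]⟩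
    rw [this.neg_pow]
    ring
  convert (hinj.hasSum_iff hodd).2 hsum using 2 with l
  simp only [Function.comp_apply, (even_two_mul l).neg_pow]
  ring

theorem hasSum_fourth_difference_one_add_rpow (a : ℝ) {x : ℝ} (hx : |x| < 1 / 2) :
    HasSum (fun l ↦ Ring.choose a (2 * (l + 1)) * (4 - 4 ^ (l + 1)) * x ^ (2 * (l + 1)))
      ((-(1 - 2 * x) ^ a + 4 * (1 - x) ^ a - 6 + 4 * (1 + x) ^ a - (1 + 2 * x) ^ a) / 2) := by
  have h1 := hasSum_two_mul_choose_even_mul_pow a (x := x) (by linarith [abs_nonneg x])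
  have h2 := hasSum_two_mul_choose_even_mul_pow a (x := 2 * x)
    (by rw [abs_mul]; norm_num; linarith)
  have h := ((h1.mul_left 4).sub h2).div_const 2
  rw [← hasSum_nat_add_iff' 1, sum_range_one] at h
  convert h using 1
  · rfl
  · funext l
    rw [mul_pow, pow_mul (2 : ℝ)]
    ring
  · simp only [mul_zero, pow_zero, Ring.choose_zero_right]
    ring

theorem summable_abs_choose_mul_four_sub_pow (a : ℝ) {x : ℝ} (hx : |x| < 1 / 2) :
    Summable fun l ↦ |Ring.choose a (2 * (l + 1)) * (4 - 4 ^ (l + 1)) * x ^ (2 * (l + 1))| := by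
  have hsum := (summable_abs_choose_mul_pow a (x := 2 * x) (by rw [abs_mul]; norm_num; linarith))
    |>.comp_injective (i := fun l ↦ 2 * (l + 1)) fun _ _ h ↦ by simpa using h
  refine .of_nonneg_of_le (fun _ ↦ abs_nonneg _) (fun l ↦ ?_) hsum
  have h4 : |(4 : ℝ) - 4 ^ (l + 1)| ≤ 4 ^ (l + 1) := by
    have : (4 : ℝ) ≤ 4 ^ (l + 1) := le_self_pow₀ (by norm_num) (by omega)
    rw [abs_sub_comm, abs_of_nonneg (by linarith)]
    linarith
  calc |Ring.choose a (2 * (l + 1)) * (4 - 4 ^ (l + 1)) * x ^ (2 * (l + 1))|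
      = |Ring.choose a (2 * (l + 1))| * |(4 : ℝ) - 4 ^ (l + 1)| * |x| ^ (2 * (l + 1)) := by
        rw [abs_mul, abs_mul, abs_pow]
    _ ≤ |Ring.choose a (2 * (l + 1))| * 4 ^ (l + 1) * |x| ^ (2 * (l + 1)) := by gcongr
    _ = |Ring.choose a (2 * (l + 1))| * |2 * x| ^ (2 * (l + 1)) := by
        rw [abs_mul, mul_pow, abs_two, pow_mul (2 : ℝ) 2 (l + 1)]
        norm_num
        ring

end Real

theorem seriesTerm_eq (H : ℝ) (r l : ℕ) :
    seriesTerm H r l = Ring.choose (2 * H) (2 * l) * (4 - 4 ^ l) * ((r : ℝ)⁻¹) ^ (2 * l) := by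
  rw [seriesTerm, Real.choose_eq_prod_div_factorial, inv_pow, div_eq_mul_inv]

theorem rhoH_natCast_eq (H : ℝ) {r : ℕ} (hr : 2 ≤ r) :
    rhoH H r = (r : ℝ) ^ (2 * H) *
      ((-(1 - 2 * (r : ℝ)⁻¹) ^ (2 * H) + 4 * (1 - (r : ℝ)⁻¹) ^ (2 * H) - 6
        + 4 * (1 + (r : ℝ)⁻¹) ^ (2 * H) - (1 + 2 * (r : ℝ)⁻¹) ^ (2 * H)) / 2) := by
  have hr' : (2 : ℝ) ≤ r := by exact_mod_cast hr
  have hr0 : (0 : ℝ) < r := by linarith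
  have hx : (r : ℝ)⁻¹ ≤ 1 / 2 := by rw [one_div]; exact inv_anti₀ two_pos hr'
  have hx0 : 0 < (r : ℝ)⁻¹ := inv_pos.2 hr0
  have scale : ∀ y : ℝ, 0 ≤ y → |(r : ℝ) * y| ^ (2 * H) = r ^ (2 * H) * y ^ (2 * H) :=
    fun y hy ↦ by rw [abs_of_nonneg (by positivity), mul_rpow hr0.le hy]
  have factor_add (k : ℝ) : (r : ℝ) + k = r * (1 + k * (r : ℝ)⁻¹) := by field_simp
  have factor_sub (k : ℝ) : (r : ℝ) - k = r * (1 - k * (r : ℝ)⁻¹) := by field_simp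
  rw [rhoH, Int.cast_natCast, factor_sub 2, factor_sub 1, factor_add 1, factor_add 2, one_mul,
    scale _ (by linarith), scale _ (by linarith), scale _ (by linarith), scale _ (by linarith),
    abs_of_pos hr0]
  ring

theorem stmt_3_general (H : ℝ) (r : ℕ) (hr : 3 ≤ r) :
    Summable (fun l : ℕ => |seriesTerm H r (l + 1)|) ∧
      rhoH H (r : ℤ) = (r : ℝ) ^ (2 * H) * ∑' l : ℕ, seriesTerm H r (l + 1) := by
  have hx : |(r : ℝ)⁻¹| < 1 / 2 := by
    have : (3 : ℝ) ≤ r := by exact_mod_cast hr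
    rw [abs_inv, Nat.abs_cast, one_div]
    exact inv_strictAnti₀ two_pos (by linarith)
  simp only [seriesTerm_eq]
  exact ⟨Real.summable_abs_choose_mul_four_sub_pow _ hx, by
    rw [(Real.hasSum_fourth_difference_one_add_rpow _ hx).tsum_eq, rhoH_natCast_eq H (by omega)]⟩

theorem stmt_3 (H : ℝ) (hH : H ∈ Set.Ioo (0 : ℝ) 1) (r : ℕ) (hr : 3 ≤ r) :
    Summable (fun l : ℕ => |seriesTerm H r (l + 1)|) ∧
      rhoH H (r : ℤ) = (r : ℝ) ^ (2 * H) * ∑' l : ℕ, seriesTerm H r (l + 1) :=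
  stmt_3_general H r hr
end

section
/- For every real u with 0 ≤ u ≤ 1/9, one has 4·log(1−u) − log(1−4u) ≤ (243/20)·u². -/
theorem stmt_5 (u : ℝ) (hu0 : 0 ≤ u) (hu1 : u ≤ 1/9) :
    4 * Real.log (1 - u) - Real.log (1 - 4 * u) ≤ (243/20) * u^2 := by
  have h1 : 0 < 1 - u := by linarith
  have h4 : 0 < 1 - 4 * u := by linarith
  have key : (1 - u)^4 ≤ (1 - 4*u) * (1 + (243/20) * u^2) := by
    nlinarith [mul_nonneg (mul_nonneg hu0 hu0) hu0, sq_nonneg u,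
      mul_nonneg (mul_nonneg hu0 hu0) (sub_nonneg.mpr hu1),
      mul_nonneg (sq_nonneg u) (sub_nonneg.mpr hu1)]
  have hpos : 0 < 1 + (243/20) * u^2 := by positivity
  have h2 : 4 * Real.log (1 - u) - Real.log (1 - 4 * u)
      = Real.log ((1 - u)^4 / (1 - 4*u)) := by
    rw [Real.log_div (by positivity) (ne_of_gt h4), Real.log_pow]
    push_cast; ring
  rw [h2]
  have h3 : (1 - u)^4 / (1 - 4*u) ≤ 1 + (243/20) * u^2 := by
    rw [div_le_iff₀ h4]; linarith [key]
  calc Real.log ((1 - u)^4 / (1 - 4*u)) ≤ Real.log (1 + (243/20) * u^2) :=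
        Real.log_le_log (by positivity) h3
    _ ≤ (1 + (243/20) * u^2) - 1 := Real.log_le_sub_one_of_pos hpos
    _ = (243/20) * u^2 := by ring
end

section
/- Fix H ∈ (0,1) and an integer r ≥ 3. Then |ρ_H(r)| ≤ 4·r^{2H}·log(1−1/r²) − r^{2H}·log(1−4/r²) ≤ (243/20)·r^{2H−4} ≤ (243/20)·r^{−2}. -/
/-!
Write `a = 2H` and `t = 1/r`. By homogeneity `ρ_H(r) = r^a F_a(t) / 2` with
`F_a(u) = 4(1+u)^a + 4(1-u)^a - (1+2u)^a - (1-2u)^a - 6`, and the middle expression is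
`r^a G(t) / 2` with `G(u) = 8 log(1-u²) - 2 log(1-4u²)`. Both `F_a` and `G` vanish to second
order at `0`, so `|F_a| ≤ G` on `[0, 1/2)` follows by integrating `|F_a''| ≤ G''` twice. The
second derivatives are multiples of `K_b(u) - K_b(2u)`, where `K_b(v) = (1+v)^b + (1-v)^b` and
`b = a - 2`, resp. `b = -2`, so the comparison reduces to the monotonicity of
`2 K_{-2} - |a(a-1)| K_{a-2}` on `[0, 1)`. The numerical bound is `log x ≤ x - 1` applied to
`x = (1-t²)⁴ / (1-4t²)`.
-/

open Real

open Set

lemma HasDerivAt.comp_two_mul {f : ℝ → ℝ} {f' v : ℝ} (h : HasDerivAt f f' (2 * v)) :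
    HasDerivAt (fun x => f (2 * x)) (2 * f') v :=
  (h.comp v ((hasDerivAt_id v).const_mul 2)).congr_deriv (by ring)

lemma monotoneOn_Ico_of_hasDerivAt_nonneg {f f' : ℝ → ℝ} {a b : ℝ}
    (hf : ∀ x ∈ Ico a b, HasDerivAt f (f' x) x) (hf' : ∀ x ∈ Ioo a b, 0 ≤ f' x) :
    MonotoneOn f (Ico a b) := by
  refine monotoneOn_of_hasDerivWithinAt_nonneg (f' := f') (convex_Ico a b)
    (fun x hx => (hf x hx).continuousAt.continuousWithinAt) ?_ ?_ <;> rw [interior_Ico]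
  · exact fun x hx => (hf x (Ioo_subset_Ico_self hx)).hasDerivWithinAt
  · exact hf'

section SecondDerivativeComparison

variable {f f' f'' g g' g'' : ℝ → ℝ} {a b : ℝ}

lemma nonneg_of_deriv2_nonneg (hf : ∀ x ∈ Ico a b, HasDerivAt f (f' x) x)
    (hf' : ∀ x ∈ Ico a b, HasDerivAt f' (f'' x) x) (h₀ : f a = 0) (h₀' : f' a = 0)
    (hf'' : ∀ x ∈ Ioo a b, 0 ≤ f'' x) {x : ℝ} (hx : x ∈ Ico a b) : 0 ≤ f x := by
  have ha : a ∈ Ico a b := ⟨le_rfl, hx.1.trans_lt hx.2⟩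
  have hmono' := monotoneOn_Ico_of_hasDerivAt_nonneg hf' hf''
  have hmono := monotoneOn_Ico_of_hasDerivAt_nonneg hf fun y hy =>
    h₀' ▸ hmono' ha (Ioo_subset_Ico_self hy) hy.1.le
  simpa [h₀] using hmono ha hx hx.1

lemma abs_le_of_abs_deriv2_le (hf : ∀ x ∈ Ico a b, HasDerivAt f (f' x) x)
    (hf' : ∀ x ∈ Ico a b, HasDerivAt f' (f'' x) x) (hg : ∀ x ∈ Ico a b, HasDerivAt g (g' x) x)
    (hg' : ∀ x ∈ Ico a b, HasDerivAt g' (g'' x) x) (hf₀ : f a = 0) (hf₀' : f' a = 0)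
    (hg₀ : g a = 0) (hg₀' : g' a = 0) (h : ∀ x ∈ Ioo a b, |f'' x| ≤ g'' x) {x : ℝ}
    (hx : x ∈ Ico a b) : |f x| ≤ g x := by
  have hsub : 0 ≤ g x - f x := nonneg_of_deriv2_nonneg (f' := fun x => g' x - f' x)
    (f'' := fun x => g'' x - f'' x) (fun y hy => (hg y hy).sub (hf y hy))
    (fun y hy => (hg' y hy).sub (hf' y hy)) (by simp [hf₀, hg₀]) (by simp [hf₀', hg₀'])
    (fun y hy => by linarith [le_abs_self (f'' y), h y hy]) hx
  have hadd : 0 ≤ g x + f x := nonneg_of_deriv2_nonneg (f' := fun x => g' x + f' x)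
    (f'' := fun x => g'' x + f'' x) (fun y hy => (hg y hy).add (hf y hy))
    (fun y hy => (hg' y hy).add (hf' y hy)) (by simp [hf₀, hg₀]) (by simp [hf₀', hg₀'])
    (fun y hy => by linarith [neg_abs_le (f'' y), h y hy]) hx
  exact abs_le.2 ⟨by linarith, by linarith⟩

end SecondDerivativeComparison

noncomputable def powSum (b v : ℝ) : ℝ := (1 + v) ^ b + (1 - v) ^ b

noncomputable def powDiff (b v : ℝ) : ℝ := (1 + v) ^ b - (1 - v) ^ b

noncomputable def logSum (v : ℝ) : ℝ := log (1 + v) + log (1 - v)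

section Derivatives

variable {v : ℝ}

lemma hasDerivAt_powSum (b : ℝ) (hv : |v| < 1) :
    HasDerivAt (powSum b) (b * powDiff (b - 1) v) v := by
  obtain ⟨h₁, h₂⟩ := abs_lt.1 hv
  have hp := ((hasDerivAt_id v).const_add 1).rpow_const (p := b) (Or.inl (by simp; linarith))
  have hm := ((hasDerivAt_id v).const_sub 1).rpow_const (p := b) (Or.inl (by simp; linarith))
  refine (hp.add hm).congr_deriv ?_
  simp only [powDiff, id]
  ring

lemma hasDerivAt_powDiff (b : ℝ) (hv : |v| < 1) :
    HasDerivAt (powDiff b) (b * powSum (b - 1) v) v := by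
  obtain ⟨h₁, h₂⟩ := abs_lt.1 hv
  have hp := ((hasDerivAt_id v).const_add 1).rpow_const (p := b) (Or.inl (by simp; linarith))
  have hm := ((hasDerivAt_id v).const_sub 1).rpow_const (p := b) (Or.inl (by simp; linarith))
  refine (hp.sub hm).congr_deriv ?_
  simp only [powSum, id]
  ring

lemma hasDerivAt_logSum (hv : |v| < 1) : HasDerivAt logSum (powDiff (-1) v) v := by
  obtain ⟨h₁, h₂⟩ := abs_lt.1 hv
  have hp := ((hasDerivAt_id v).const_add 1).log (by simp; linarith)
  have hm := ((hasDerivAt_id v).const_sub 1).log (by simp; linarith)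
  refine (hp.add hm).congr_deriv ?_
  simp only [powDiff, rpow_neg_one, id]
  ring

end Derivatives

section Monotonicity

variable {v : ℝ}

lemma abs_lt_one_of_mem_Ico (hv : v ∈ Ico (0 : ℝ) 1) : |v| < 1 :=
  abs_lt.2 ⟨by linarith [hv.1], hv.2⟩

lemma powDiff_le_powDiff {b b' : ℝ} (hb : b ≤ b') (hv : v ∈ Ico (0 : ℝ) 1) :
    powDiff b v ≤ powDiff b' v := by
  obtain ⟨hv₀, hv₁⟩ := hv
  have hp : (1 + v) ^ b ≤ (1 + v) ^ b' := rpow_le_rpow_of_exponent_le (by linarith) hb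
  have hm : (1 - v) ^ b' ≤ (1 - v) ^ b :=
    rpow_le_rpow_of_exponent_ge (by linarith) (by linarith) hb
  unfold powDiff
  linarith

lemma powDiff_nonpos {b : ℝ} (hb : b ≤ 0) (hv : v ∈ Ico (0 : ℝ) 1) : powDiff b v ≤ 0 := by
  simpa [powDiff] using powDiff_le_powDiff hb hv

lemma monotoneOn_powSum {b : ℝ} (hb : b ≤ 0) : MonotoneOn (powSum b) (Ico 0 1) :=
  monotoneOn_Ico_of_hasDerivAt_nonneg
    (fun v hv => hasDerivAt_powSum b (abs_lt_one_of_mem_Ico hv))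
    (fun v hv => mul_nonneg_of_nonpos_of_nonpos hb
      (powDiff_nonpos (by linarith) (Ioo_subset_Ico_self hv)))

lemma monotoneOn_two_mul_powSum_sub_mul_powSum {a c : ℝ} (ha₀ : 0 ≤ a) (ha₃ : a ≤ 3)
    (hc : c * (2 - a) ≤ 4) :
    MonotoneOn (fun v => 2 * powSum (-2) v - c * powSum (a - 2) v) (Ico 0 1) := by
  refine monotoneOn_Ico_of_hasDerivAt_nonneg (fun v hv =>
    ((hasDerivAt_powSum (-2) (abs_lt_one_of_mem_Ico hv)).const_mul 2).sub
      ((hasDerivAt_powSum (a - 2) (abs_lt_one_of_mem_Ico hv)).const_mul c)) fun v hv => ?_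
  have hv' := Ioo_subset_Ico_self hv
  have hXY := powDiff_le_powDiff (show (-2 : ℝ) - 1 ≤ a - 2 - 1 by linarith) hv'
  have hY := powDiff_nonpos (show a - 2 - 1 ≤ 0 by linarith) hv'
  -- the derivative is `-4 X + c (2 - a) Y ≥ (c (2 - a) - 4) Y ≥ 0` with `X ≤ Y ≤ 0`
  nlinarith [mul_nonneg_of_nonpos_of_nonpos (sub_nonpos.2 hc) hY]

end Monotonicity

noncomputable def rhoProfile (a u : ℝ) : ℝ := 4 * powSum a u - powSum a (2 * u) - 6

noncomputable def logProfile (u : ℝ) : ℝ := 8 * logSum u - 2 * logSum (2 * u)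

section ProfileDerivatives

variable {u : ℝ}

lemma abs_lt_one_and_abs_two_mul_lt_one (hu : |u| < 1 / 2) : |u| < 1 ∧ |2 * u| < 1 := by
  rw [abs_mul, abs_two]
  constructor <;> linarith

lemma hasDerivAt_rhoProfile (a : ℝ) (hu : |u| < 1 / 2) :
    HasDerivAt (rhoProfile a) (a * (4 * powDiff (a - 1) u - 2 * powDiff (a - 1) (2 * u))) u := by
  obtain ⟨h₁, h₂⟩ := abs_lt_one_and_abs_two_mul_lt_one hu
  refine ((((hasDerivAt_powSum a h₁).const_mul 4).sub
    (hasDerivAt_powSum a h₂).comp_two_mul).sub_const 6).congr_deriv ?_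
  ring

lemma hasDerivAt_rhoProfile_deriv (a : ℝ) (hu : |u| < 1 / 2) :
    HasDerivAt (fun u => a * (4 * powDiff (a - 1) u - 2 * powDiff (a - 1) (2 * u)))
      (4 * (a * (a - 1)) * (powSum (a - 2) u - powSum (a - 2) (2 * u))) u := by
  obtain ⟨h₁, h₂⟩ := abs_lt_one_and_abs_two_mul_lt_one hu
  have h := ((((hasDerivAt_powDiff (a - 1) h₁).const_mul 4).sub
    ((hasDerivAt_powDiff (a - 1) h₂).comp_two_mul.const_mul 2)).const_mul a)
  rw [show a - 1 - 1 = a - 2 by ring] at h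
  exact h.congr_deriv (by ring)

lemma hasDerivAt_logProfile (hu : |u| < 1 / 2) :
    HasDerivAt logProfile (8 * powDiff (-1) u - 4 * powDiff (-1) (2 * u)) u := by
  obtain ⟨h₁, h₂⟩ := abs_lt_one_and_abs_two_mul_lt_one hu
  refine (((hasDerivAt_logSum h₁).const_mul 8).sub
    ((hasDerivAt_logSum h₂).comp_two_mul.const_mul 2)).congr_deriv ?_
  ring

lemma hasDerivAt_logProfile_deriv (hu : |u| < 1 / 2) :
    HasDerivAt (fun u => 8 * powDiff (-1) u - 4 * powDiff (-1) (2 * u))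
      (8 * (powSum (-2) (2 * u) - powSum (-2) u)) u := by
  obtain ⟨h₁, h₂⟩ := abs_lt_one_and_abs_two_mul_lt_one hu
  have h := ((hasDerivAt_powDiff (-1) h₁).const_mul 8).sub
    ((hasDerivAt_powDiff (-1) h₂).comp_two_mul.const_mul 4)
  rw [show (-1 : ℝ) - 1 = -2 by norm_num] at h
  exact h.congr_deriv (by ring)

end ProfileDerivatives

lemma abs_rhoProfile_deriv2_le {a u : ℝ} (ha₀ : 0 ≤ a) (ha₂ : a ≤ 2)
    (hu : u ∈ Ico (0 : ℝ) (1 / 2)) :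
    |4 * (a * (a - 1)) * (powSum (a - 2) u - powSum (a - 2) (2 * u))|
      ≤ 8 * (powSum (-2) (2 * u) - powSum (-2) u) := by
  have hu₁ : u ∈ Ico (0 : ℝ) 1 := ⟨hu.1, by linarith [hu.2]⟩
  have hu₂ : 2 * u ∈ Ico (0 : ℝ) 1 := ⟨by linarith [hu.1], by linarith [hu.2]⟩
  have hle : u ≤ 2 * u := by linarith [hu.1]
  have hc : |a * (a - 1)| * (2 - a) ≤ 4 := by
    have : |a * (a - 1)| ≤ 2 := abs_le.2 ⟨by nlinarith, by nlinarith⟩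
    nlinarith [abs_nonneg (a * (a - 1))]
  have hK := monotoneOn_powSum (show a - 2 ≤ 0 by linarith) hu₁ hu₂ hle
  have hM := monotoneOn_two_mul_powSum_sub_mul_powSum ha₀ (by linarith) hc hu₁ hu₂ hle
  simp only at hM
  rw [abs_mul, abs_mul, abs_of_pos four_pos, abs_of_nonpos (sub_nonpos.2 hK)]
  linarith

lemma abs_lt_half_of_mem_Ico {u : ℝ} (hu : u ∈ Ico (0 : ℝ) (1 / 2)) : |u| < 1 / 2 :=
  abs_lt.2 ⟨by linarith [hu.1], hu.2⟩

lemma abs_rhoProfile_le_logProfile {a u : ℝ} (ha₀ : 0 ≤ a) (ha₂ : a ≤ 2)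
    (hu : u ∈ Ico (0 : ℝ) (1 / 2)) : |rhoProfile a u| ≤ logProfile u :=
  abs_le_of_abs_deriv2_le
    (fun x hx => hasDerivAt_rhoProfile a (abs_lt_half_of_mem_Ico hx))
    (fun x hx => hasDerivAt_rhoProfile_deriv a (abs_lt_half_of_mem_Ico hx))
    (fun x hx => hasDerivAt_logProfile (abs_lt_half_of_mem_Ico hx))
    (fun x hx => hasDerivAt_logProfile_deriv (abs_lt_half_of_mem_Ico hx))
    (by norm_num [rhoProfile, powSum]) (by simp [powDiff]) (by simp [logProfile, logSum])
    (by simp [powDiff])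
    (fun x hx => abs_rhoProfile_deriv2_le ha₀ ha₂ (Ioo_subset_Ico_self hx)) hu

lemma rhoH_eq (H : ℝ) {r : ℤ} (hr : 2 ≤ r) :
    rhoH H r = (r : ℝ) ^ (2 * H) * rhoProfile (2 * H) (1 / r) / 2 := by
  have hr' : (2 : ℝ) ≤ r := by exact_mod_cast hr
  have hr₀ : (0 : ℝ) ≤ r := by linarith
  have hscale : ∀ c : ℝ, 0 ≤ (r : ℝ) + c → |(r : ℝ) + c| ^ (2 * H)
      = (r : ℝ) ^ (2 * H) * (1 + c * (1 / r)) ^ (2 * H) := fun c hc => by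
    rw [abs_of_nonneg hc, ← mul_rpow hr₀ (by field_simp; linarith)]
    congr 1
    field_simp
  simp only [rhoH, rhoProfile, powSum, sub_eq_add_neg (r : ℝ)]
  rw [hscale (-2) (by linarith), hscale (-1) (by linarith), hscale 1 (by linarith),
    hscale 2 (by linarith), abs_of_nonneg hr₀]
  ring_nf

lemma logSum_eq_log_one_sub_sq {v : ℝ} (h₁ : 1 + v ≠ 0) (h₂ : 1 - v ≠ 0) :
    logSum v = log (1 - v ^ 2) := by
  rw [logSum, ← log_mul h₁ h₂]
  ring_nf

lemma logProfile_eq {u : ℝ} (hu : |u| < 1 / 2) :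
    logProfile u = 2 * (4 * log (1 - u ^ 2) - log (1 - 4 * u ^ 2)) := by
  obtain ⟨h₁, h₂⟩ := abs_lt.1 hu
  rw [logProfile, logSum_eq_log_one_sub_sq (by linarith) (by linarith),
    logSum_eq_log_one_sub_sq (by linarith) (by linarith)]
  ring_nf

lemma four_mul_log_one_sub_sq_sub_log_le {t : ℝ} (ht : |t| ≤ 1 / 3) :
    4 * log (1 - t ^ 2) - log (1 - 4 * t ^ 2) ≤ 243 / 20 * t ^ 4 := by
  have hs : t ^ 2 ≤ 1 / 9 := by
    have := sq_le_sq' (abs_le.1 ht).1 (abs_le.1 ht).2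
    linarith
  have hs₀ := sq_nonneg t
  have hx : 0 < 1 - t ^ 2 := by linarith
  have hy : 0 < 1 - 4 * t ^ 2 := by linarith
  have hlog : 4 * log (1 - t ^ 2) - log (1 - 4 * t ^ 2)
      = log ((1 - t ^ 2) ^ 4 / (1 - 4 * t ^ 2)) := by
    rw [log_div (by positivity) hy.ne', log_pow]
    push_cast
    ring
  rw [hlog]
  refine (log_le_sub_one_of_pos (by positivity)).trans ?_
  rw [div_sub_one hy.ne', div_le_iff₀ hy]
  nlinarith [mul_nonneg (mul_nonneg hs₀ hs₀) (sub_nonneg.2 hs), mul_nonneg hs₀ hs₀]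

theorem stmt_6 (H : ℝ) (hH : H ∈ Set.Ioo (0 : ℝ) 1) (r : ℕ) (hr : 3 ≤ r) :
    |rhoH H (r : ℤ)|
        ≤ 4 * (r : ℝ) ^ (2 * H) * Real.log (1 - 1 / (r : ℝ) ^ 2)
          - (r : ℝ) ^ (2 * H) * Real.log (1 - 4 / (r : ℝ) ^ 2) ∧
      4 * (r : ℝ) ^ (2 * H) * Real.log (1 - 1 / (r : ℝ) ^ 2)
          - (r : ℝ) ^ (2 * H) * Real.log (1 - 4 / (r : ℝ) ^ 2)
        ≤ (243 / 20) * (r : ℝ) ^ (2 * H - 4) ∧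
      (243 / 20) * (r : ℝ) ^ (2 * H - 4) ≤ (243 / 20) * (r : ℝ) ^ (-2 : ℝ) := by
  obtain ⟨hH₀, hH₁⟩ := hH
  have hr₃ : (3 : ℝ) ≤ r := by exact_mod_cast hr
  have hr₀ : (0 : ℝ) < r := by linarith
  have hrpow : (0 : ℝ) < (r : ℝ) ^ (2 * H) := rpow_pos_of_pos hr₀ _
  rw [rhoH_eq H (by omega), Int.cast_natCast, abs_div, abs_mul, abs_of_pos hrpow, abs_two]
  set t : ℝ := 1 / r with ht
  have ht₀ : 0 ≤ t := by positivity
  have ht₃ : t ≤ 1 / 3 := by rw [ht, div_le_div_iff₀ hr₀ (by norm_num)]; linarith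
  have hbound : 4 * (r : ℝ) ^ (2 * H) * log (1 - 1 / (r : ℝ) ^ 2)
      - (r : ℝ) ^ (2 * H) * log (1 - 4 / (r : ℝ) ^ 2)
      = (r : ℝ) ^ (2 * H) * (4 * log (1 - t ^ 2) - log (1 - 4 * t ^ 2)) := by
    rw [ht]; ring_nf
  have hrt : (r : ℝ) ^ (2 * H) * t ^ 4 = (r : ℝ) ^ (2 * H - 4) := by
    rw [rpow_sub hr₀, ht, div_pow, one_pow, mul_one_div, ← rpow_natCast]
    norm_num
  rw [hbound]
  refine ⟨?_, ?_, ?_⟩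
  · have hF := abs_rhoProfile_le_logProfile (a := 2 * H) (by linarith) (by linarith)
      (show t ∈ Ico 0 (1 / 2) from ⟨ht₀, by linarith⟩)
    rw [logProfile_eq (abs_lt.2 ⟨by linarith, by linarith⟩)] at hF
    linarith [mul_le_mul_of_nonneg_left hF hrpow.le]
  · calc _ ≤ (r : ℝ) ^ (2 * H) * (243 / 20 * t ^ 4) := mul_le_mul_of_nonneg_left
          (four_mul_log_one_sub_sq_sub_log_le (abs_le.2 ⟨by linarith, ht₃⟩)) hrpow.le
      _ = _ := by rw [← hrt]; ring
  · gcongr <;> linarith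
end

section
/- Fix H ∈ (0,1) and an integer n ≥ 1, and let X = (X_0, ..., X_{n−1}) be a centered Gaussian random vector with covariance E[X_k X_l] = ρ_H(k−l)/n^{2H}. Define Z_n = n^{2H−1/2}·Σ_{k=0}^{n−1} X_k² − √n·(4 − 4^H) and Q_2 = 2·n^{4H−1}·Σ_{k,l=0}^{n−1} X_k X_l · ρ_H(k−l)/n^{2H}. Then, almost surely, Q_2 ≤ α_n·Z_n + β, where α_n = (2/√n)·Σ_{r∈ℤ}|ρ_H(r)| and β = 6·Σ_{r∈ℤ}|ρ_H(r)|. -/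
open MeasureTheory ProbabilityTheory Real

/-- `X` is a centered Gaussian random vector with covariance matrix `R` under `P`:
every linear combination of the coordinates is a centered real Gaussian, with the
variance prescribed by `R`. -/
def IsCenteredGaussianVec {Ω : Type*} [MeasurableSpace Ω] (P : Measure Ω) {N : ℕ}
    (X : Ω → Fin N → ℝ) (R : Fin N → Fin N → ℝ) : Prop :=
  (∀ k, Measurable fun ω => X ω k) ∧
    ∀ c : Fin N → ℝ,
      P.map (fun ω => ∑ k, c k * X ω k) =
        gaussianReal 0 (∑ k, ∑ l, c k * c l * R k l).toNNReal

/-! Bounding each product by `X_k X_l ρ_H(k-l) ≤ |ρ_H(k-l)| (X_k² + X_l²) / 2` (Schur's test)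
gives `Q₂ ≤ 2 n^{2H-1} s ∑ X_k²` with `s = ∑_r |ρ_H(r)|`, while `α_n Z_n + β` equals the right-hand
side plus `2 s (4^H - 1) ≥ 0`. The series `s` converges because `ρ_H(r)` is `-1/2` times the fourth
forward difference of `x ↦ x^{2H}` at `r - 2`, which the iterated mean value theorem bounds by a
multiple of `(r - 2)^{2H-4}`. -/

theorem exists_fwdDiff_iterate_eq_of_hasDerivAt {F : ℕ → ℝ → ℝ} {a : ℝ}
    (hF : ∀ k y, a < y → HasDerivAt (F k) (F (k + 1) y) y) (n : ℕ) {x : ℝ} (hx : a < x) :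
    ∃ ξ ∈ Set.Icc x (x + n), (fwdDiff 1)^[n] (F 0) x = F n ξ := by
  induction n generalizing F x with
  | zero => exact ⟨x, by simp, rfl⟩
  | succ n ih =>
    have hΔF : ∀ k y, a < y → HasDerivAt (fwdDiff 1 (F k)) (fwdDiff 1 (F (k + 1)) y) y :=
      fun k y hy => ((hF k (y + 1) (by linarith)).comp_add_const y 1).sub (hF k y hy)
    obtain ⟨ξ, hξ, hξeq⟩ := ih hΔF hx
    have hξa : a < ξ := hx.trans_le hξ.1
    obtain ⟨η, hη, hηeq⟩ := exists_hasDerivAt_eq_slope (F n) (F (n + 1)) (lt_add_one ξ)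
      (fun y hy => (hF n y (hξa.trans_le hy.1)).continuousAt.continuousWithinAt)
      (fun y hy => hF n y (hξa.trans hy.1))
    refine ⟨η, ⟨by linarith [hξ.1, hη.1], by push_cast; linarith [hξ.2, hη.2]⟩, ?_⟩
    rw [Function.iterate_succ_apply, hξeq, hηeq, add_sub_cancel_left, div_one]
    rfl

theorem hasDerivAt_iterate_deriv_rpow_const (p : ℝ) (k : ℕ) {y : ℝ} (hy : 0 < y) :
    HasDerivAt (deriv^[k] fun x : ℝ => x ^ p) (deriv^[k + 1] (fun x : ℝ => x ^ p) y) y := by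
  rw [Function.iterate_succ_apply']
  refine DifferentiableAt.hasDerivAt ?_
  rw [funext fun x => iter_deriv_rpow_const p x k]
  exact (differentiableAt_rpow_const_of_ne _ hy.ne').const_mul _

theorem rhoH_eq_neg_fwdDiff_iterate_four (H : ℝ) {r : ℤ} (hr : 2 ≤ r) :
    rhoH H r = -(fwdDiff 1)^[4] (fun x : ℝ => x ^ (2 * H)) (r - 2) / 2 := by
  have hr' : (2 : ℝ) ≤ r := by exact_mod_cast hr
  rw [rhoH, abs_of_nonneg (by linarith), abs_of_nonneg (by linarith), abs_of_nonneg (by linarith),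
    abs_of_nonneg (by linarith), abs_of_nonneg (by linarith)]
  simp only [Function.iterate_succ_apply', Function.iterate_zero_apply, fwdDiff]
  ring_nf

theorem abs_rhoH_le (H : ℝ) (hH : H ≤ 2) {r : ℤ} (hr : 3 ≤ r) :
    |rhoH H r| ≤ |(descPochhammer ℝ 4).eval (2 * H)| / 2 * ((r : ℝ) - 2) ^ (2 * H - 4) := by
  have hr' : (0 : ℝ) < r - 2 := sub_pos.mpr (by exact_mod_cast (by omega : (2 : ℤ) < r))
  obtain ⟨ξ, hξ, hξeq⟩ := exists_fwdDiff_iterate_eq_of_hasDerivAt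
    (fun k y hy => hasDerivAt_iterate_deriv_rpow_const (2 * H) k hy) 4 hr'
  rw [Function.iterate_zero_apply] at hξeq
  rw [rhoH_eq_neg_fwdDiff_iterate_four H (by omega), hξeq,
    iter_deriv_rpow_const, abs_div, abs_neg, abs_two, abs_mul,
    abs_of_nonneg (rpow_nonneg (hr'.trans_le hξ.1).le _), mul_div_right_comm]
  gcongr
  exact rpow_le_rpow_of_nonpos hr' hξ.1 (by push_cast; linarith)

theorem rhoH_neg (H : ℝ) (r : ℤ) : rhoH H (-r) = rhoH H r := by
  have hsub (a : ℝ) : |-(r : ℝ) - a| = |(r : ℝ) + a| := by rw [← abs_neg]; ring_nf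
  have hadd (a : ℝ) : |-(r : ℝ) + a| = |(r : ℝ) - a| := by rw [← abs_neg]; ring_nf
  simp only [rhoH, Int.cast_neg, hsub, hadd, abs_neg]
  ring

theorem summable_abs_rhoH {H : ℝ} (hH : H < 3 / 2) : Summable fun r : ℤ => |rhoH H r| := by
  set C := |(descPochhammer ℝ 4).eval (2 * H)| / 2
  have hmajor : Summable fun m : ℕ => C * ((m + 3 : ℕ) - 2 : ℝ) ^ (2 * H - 4) := by
    have hshift :=
      (summable_nat_add_iff 1).mpr (summable_nat_rpow.mpr (by linarith : 2 * H - 4 < -1))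
    refine (hshift.mul_left C).congr fun m => ?_
    push_cast
    ring_nf
  have hnat : Summable fun m : ℕ => |rhoH H m| :=
    (summable_nat_add_iff 3).mp <| hmajor.of_nonneg_of_le (fun _ => abs_nonneg _)
      fun m => by exact_mod_cast abs_rhoH_le H (by linarith) (r := m + 3) (by omega)
  exact .of_nat_of_neg hnat (by simpa [rhoH_neg] using hnat)

theorem sum_mul_mul_le_of_abs_sum_le {ι : Type*} [Fintype ι] (c : ι → ι → ℝ) (x : ι → ℝ)
    {B : ℝ} (hrow : ∀ k, ∑ l, |c k l| ≤ B) (hcol : ∀ l, ∑ k, |c k l| ≤ B) :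
    ∑ k, ∑ l, x k * x l * c k l ≤ B * ∑ k, x k ^ 2 := by
  calc ∑ k, ∑ l, x k * x l * c k l
      ≤ ∑ k, ∑ l, (x k ^ 2 * |c k l| + x l ^ 2 * |c k l|) / 2 := by
        gcongr with k _ l _
        nlinarith [sq_nonneg (x k - x l), sq_nonneg (x k + x l), abs_nonneg (c k l),
          le_abs_self (c k l), neg_abs_le (c k l)]
    _ = (∑ k, x k ^ 2 * ∑ l, |c k l| + ∑ l, x l ^ 2 * ∑ k, |c k l|) / 2 := by
        simp only [Finset.mul_sum, ← Finset.sum_div, Finset.sum_add_distrib]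
        rw [Finset.sum_comm (f := fun k l => x l ^ 2 * |c k l|)]
    _ ≤ (∑ k, x k ^ 2 * B + ∑ l, x l ^ 2 * B) / 2 := by
        gcongr with k _ l _
        exacts [hrow k, hcol l]
    _ = B * ∑ k, x k ^ 2 := by rw [← Finset.sum_mul]; ring

theorem sum_comp_le_tsum_of_injective {ι α : Type*} [Fintype ι] {f : α → ℝ} (hf : Summable f)
    (hf₀ : ∀ a, 0 ≤ f a) {g : ι → α} (hg : Function.Injective g) : ∑ i, f (g i) ≤ ∑' a, f a :=
  (tsum_fintype _).symm.trans_le (tsum_comp_le_tsum_of_inj hf hf₀ hg)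

theorem sum_mul_mul_rhoH_le {H : ℝ} (hH : H < 3 / 2) {n : ℕ} (x : Fin n → ℝ) :
    ∑ k, ∑ l, x k * x l * rhoH H ((k : ℤ) - (l : ℤ)) ≤ (∑' r : ℤ, |rhoH H r|) * ∑ k, x k ^ 2 :=
  sum_mul_mul_le_of_abs_sum_le _ _
    (fun k => sum_comp_le_tsum_of_injective (summable_abs_rhoH hH) (fun _ => abs_nonneg _)
      fun l l' h => Fin.ext (by simpa using h))
    (fun l => sum_comp_le_tsum_of_injective (summable_abs_rhoH hH) (fun _ => abs_nonneg _)
      fun k k' h => Fin.ext (by simpa using h))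

theorem stmt_10_general (H : ℝ) (hH : H ∈ Set.Ioo (0 : ℝ) 1) (n : ℕ) (hn : 1 ≤ n)
    {Ω : Type*} [MeasurableSpace Ω] (P : Measure Ω)
    (X : Ω → Fin n → ℝ)
    (Z Q₂ : Ω → ℝ)
    (hZ : ∀ ω, Z ω = (n : ℝ) ^ (2 * H - 1/2) * ∑ k, (X ω k) ^ 2
        - Real.sqrt n * (4 - (4 : ℝ) ^ H))
    (hQ₂ : ∀ ω, Q₂ ω = 2 * (n : ℝ) ^ (4 * H - 1) *
        ∑ k, ∑ l, X ω k * X ω l * (rhoH H ((k : ℤ) - (l : ℤ)) / (n : ℝ) ^ (2 * H))) :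
    ∀ᵐ ω ∂P, Q₂ ω ≤ (2 / Real.sqrt n * ∑' r : ℤ, |rhoH H r|) * Z ω
        + 6 * ∑' r : ℤ, |rhoH H r| := by
  refine ae_of_all P fun ω => ?_
  have hnpos : (0 : ℝ) < n := by exact_mod_cast hn
  have hQ : Q₂ ω = 2 * (n : ℝ) ^ (2 * H - 1) *
      ∑ k, ∑ l, X ω k * X ω l * rhoH H ((k : ℤ) - (l : ℤ)) := by
    simp only [hQ₂, mul_div_assoc', ← Finset.sum_div]
    rw [show 4 * H - 1 = 2 * H - 1 + 2 * H by ring, rpow_add hnpos]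
    field_simp
  have hZ' : Z ω = √n * ((n : ℝ) ^ (2 * H - 1) * ∑ k, X ω k ^ 2 - (4 - (4 : ℝ) ^ H)) := by
    rw [hZ, show 2 * H - 1 / 2 = 2 * H - 1 + 1 / 2 by ring, rpow_add hnpos, ← sqrt_eq_rpow]
    ring
  have hs : 0 ≤ ∑' r : ℤ, |rhoH H r| := tsum_nonneg fun _ => abs_nonneg _
  have h4H : (1 : ℝ) ≤ 4 ^ H := one_le_rpow (by norm_num) hH.1.le
  calc Q₂ ω = _ := hQ
    _ ≤ 2 * (n : ℝ) ^ (2 * H - 1) * ((∑' r : ℤ, |rhoH H r|) * ∑ k, X ω k ^ 2) := by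
        gcongr
        exact sum_mul_mul_rhoH_le (by linarith [hH.2]) (X ω)
    _ ≤ _ := by
        rw [hZ']
        field_simp
        nlinarith

theorem stmt_10 (H : ℝ) (hH : H ∈ Set.Ioo (0 : ℝ) 1) (n : ℕ) (hn : 1 ≤ n)
    {Ω : Type*} [MeasurableSpace Ω] (P : Measure Ω) [IsProbabilityMeasure P]
    (X : Ω → Fin n → ℝ)
    (hX : IsCenteredGaussianVec P X
      (fun k l => rhoH H ((k : ℤ) - (l : ℤ)) / (n : ℝ) ^ (2 * H)))
    (Z Q₂ : Ω → ℝ)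
    (hZ : ∀ ω, Z ω = (n : ℝ) ^ (2 * H - 1/2) * ∑ k, (X ω k) ^ 2
        - Real.sqrt n * (4 - (4 : ℝ) ^ H))
    (hQ₂ : ∀ ω, Q₂ ω = 2 * (n : ℝ) ^ (4 * H - 1) *
        ∑ k, ∑ l, X ω k * X ω l * (rhoH H ((k : ℤ) - (l : ℤ)) / (n : ℝ) ^ (2 * H))) :
    ∀ᵐ ω ∂P, Q₂ ω ≤ (2 / Real.sqrt n * ∑' r : ℤ, |rhoH H r|) * Z ω
        + 6 * ∑' r : ℤ, |rhoH H r| :=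
  stmt_10_general H hH n hn P X Z Q₂ hZ hQ₂
end
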